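/- If P ∈ Π̂_n is regular (i.e., f ↦ π(f ∘ σ(P)) is injective on F), then P is not a torsion element: Q ∘ P = 0 with Q ∈ D̂_n^sym implies Q = 0. -/

import Mathlib

/-!
STATEMENT 15: If `P ∈ Π̂ₙ` is regular (i.e. `f ↦ π(f ∘ σ(P))` is injective on
`F`), then `P` is not a torsion element: `Q ∘ P = 0` with `Q ∈ D̂ₙ^sym`
implies `Q = 0`.  Here `n = m+1`, `Π̂ₙ` consists of series
`Σ_{s∈ℤ} a_s ∂ₙ^s` (`a_s` not involving `∂ₙ`) of finite order, a left
`D̂ₙ^sym`-module.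
-/

open MvPowerSeries

noncomputable section

variable {K : Type*} [Field K] [CharZero K] {m : ℕ}

def dg {m : ℕ} (k : Fin m → ℕ) : ℕ := ∑ i, k i

def dgF {N : ℕ} (μ : Fin N →₀ ℕ) : ℕ := μ.sum fun _ e => e

/-- elements of `Π̂ₙ` (`n = m+1`): coefficients indexed by
`(∂₁,…,∂_{n−1})`-exponents in `ℕ^m` and a `∂ₙ`-exponent in `ℤ` -/
abbrev PiOp (m : ℕ) (K : Type*) [Field K] :=
  ((Fin m → ℕ) × ℤ) → MvPowerSeries (Fin (m + 1)) K

/-- elements of `D̂ₙ^sym`, with the `∂ₙ`-exponent split off in `ℕ` -/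
abbrev DOp (m : ℕ) (K : Type*) [Field K] :=
  ((Fin m → ℕ) × ℕ) → MvPowerSeries (Fin (m + 1)) K

/-- the order function on `Π̂ₙ` -/
def ordPi (P : PiOp m K) : EReal :=
  ⨆ (ks : (Fin m → ℕ) × ℤ) (μ : Fin (m + 1) →₀ ℕ)
    (_ : MvPowerSeries.coeff μ (P ks) ≠ 0),
    ((((dg ks.1 : ℤ) + ks.2 - (dgF μ : ℤ) : ℤ) : ℝ) : EReal)

/-- the order function on `D̂ₙ^sym` -/
def ordD (Q : DOp m K) : EReal :=
  ⨆ (kt : (Fin m → ℕ) × ℕ) (μ : Fin (m + 1) →₀ ℕ)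
    (_ : MvPowerSeries.coeff μ (Q kt) ≠ 0),
    ((((dg kt.1 : ℤ) + (kt.2 : ℤ) - (dgF μ : ℤ) : ℤ) : ℝ) : EReal)

def Dmulti (j : Fin (m + 1) → ℕ) (b : MvPowerSeries (Fin (m + 1)) K) :
    MvPowerSeries (Fin (m + 1)) K :=
  fun ν => (∏ i, (((ν i + j i).factorial / (ν i).factorial : ℕ) : K)) *
    MvPowerSeries.coeff (ν + Finsupp.equivFunOnFinite.symm j) b

open Classical in
/-- the left action of `D̂ₙ^sym` on `Π̂ₙ` given by the Leibniz rule,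
computed coefficientwise -/
def opAct (Q : DOp m K) (A : PiOp m K) : PiOp m K :=
  fun ks => fun μ =>
    ∑ᶠ (k1 : (Fin m → ℕ) × ℕ) (j : (Fin m → ℕ) × ℕ),
      if j.1 ≤ k1.1 ∧ j.2 ≤ k1.2 ∧ (fun a => k1.1 a - j.1 a) ≤ ks.1 then
        (((∏ a, ((k1.1 a).choose (j.1 a))) * (k1.2.choose j.2) : ℕ) : K) *
          MvPowerSeries.coeff μ
            (Q k1 * Dmulti (Fin.snoc j.1 j.2)
              (A (fun a => ks.1 a - (k1.1 a - j.1 a), ks.2 - ((k1.2 : ℤ) - (j.2 : ℤ)))))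
      else 0

open Classical in
/-- the highest symbol `σ(P)` of `P ∈ Π̂ₙ` with `ord P = d`: its homogeneous
component of ord-degree `d` -/
def compPi (P : PiOp m K) (d : ℤ) : PiOp m K :=
  fun ks => fun μ =>
    if ((dg ks.1 : ℤ) + ks.2 - (dgF μ : ℤ)) = d then MvPowerSeries.coeff μ (P ks) else 0

/-- the projection `π : Π̂ₙ → Π̂ₙ/(x₁,…,xₙ)Π̂ₙ = Vₙ ∩ Πₙ` -/
def piPi (A : PiOp m K) : ((Fin m → ℕ) × ℤ) → K :=
  fun ks => MvPowerSeries.constantCoeff (A ks)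

/-- the lift of an element of `F` (finitely supported constant coefficients)
to a constant-coefficient operator in `D̂ₙ^sym` -/
def liftD (f : ((Fin m → ℕ) × ℕ) →₀ K) : DOp m K :=
  fun kt => MvPowerSeries.C (f kt)

/-!
Let `e = ord Q` and, among the monomials `x^μ ∂^k` of `Q` of degree `e`, pick one whose
`x`-exponent `μ₀` has least total degree; the `x^μ₀`-coefficients of the degree-`e` part of `Q`
form a nonzero `f ∈ F`. Degrees add along the Leibniz rule, so the constant term of `f ∘ σ(P)` at `∂^ks` vanishes unless `∂^ks x^μ₀`
has degree `e + d`, and then it equals the `x^μ₀`-coefficient of `(Q ∘ P)(ks)`: any other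
contribution to that coefficient would come from a top-degree monomial `x^μ₁ ∂^k` of `Q` with
`μ₁ < μ₀`, against the choice of `μ₀`. Hence `Q ∘ P = 0` forces `π(f ∘ σ(P)) = 0`, contradicting
regularity.
-/

section

variable {K : Type*} [Field K] {m : ℕ}

def degPi (ks : (Fin m → ℕ) × ℤ) (μ : Fin (m + 1) →₀ ℕ) : ℤ := dg ks.1 + ks.2 - dgF μ

def degD (kt : (Fin m → ℕ) × ℕ) (μ : Fin (m + 1) →₀ ℕ) : ℤ := dg kt.1 + kt.2 - dgF μ

theorem dgF_eq_degree {N : ℕ} (μ : Fin N →₀ ℕ) : dgF μ = μ.degree := rfl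

theorem dgF_add {N : ℕ} (μ ν : Fin N →₀ ℕ) : dgF (μ + ν) = dgF μ + dgF ν := by
  simp only [dgF_eq_degree, map_add]

theorem dgF_equivFunOnFinite_symm_snoc (j : Fin m → ℕ) (t : ℕ) :
    dgF (Finsupp.equivFunOnFinite.symm (Fin.snoc j t : Fin (m + 1) → ℕ)) = dg j + t := by
  simp [dgF_eq_degree, Finsupp.degree_eq_sum, Fin.sum_univ_castSucc, dg]

theorem finite_setOf_dg_add_eq (N : ℕ) :
    {kt : (Fin m → ℕ) × ℕ | dg kt.1 + kt.2 = N}.Finite := by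
  refine ((Set.finite_Iic fun _ => N).prod (Set.finite_Iic N)).subset ?_
  rintro ⟨k, t⟩ (hkt : dg k + t = N)
  have hk : ∀ a, k a ≤ dg k := fun a => Finset.single_le_sum (fun _ _ => Nat.zero_le _)
    (Finset.mem_univ a)
  exact ⟨fun a => show k a ≤ N by linarith [hk a], show t ≤ N by omega⟩

/-- Degrees add up along the Leibniz rule defining `opAct`. -/
theorem degPi_eq_degD_add_degPi {ks : (Fin m → ℕ) × ℤ} {k j : (Fin m → ℕ) × ℕ}
    (hjk : j.1 ≤ k.1) (hks : (fun a => k.1 a - j.1 a) ≤ ks.1)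
    {μ μ₁ μ₂ : Fin (m + 1) →₀ ℕ} (hμ : μ₁ + μ₂ = μ) :
    degPi ks μ = degD k μ₁ +
      degPi (fun a => ks.1 a - (k.1 a - j.1 a), ks.2 - ((k.2 : ℤ) - j.2))
        (μ₂ + Finsupp.equivFunOnFinite.symm (Fin.snoc j.1 j.2)) := by
  have hdg : (dg (fun a => ks.1 a - (k.1 a - j.1 a)) : ℤ) = dg ks.1 - dg k.1 + dg j.1 := by
    simp only [dg]
    push_cast
    rw [← Finset.sum_sub_distrib, ← Finset.sum_add_distrib]
    refine Finset.sum_congr rfl fun a _ => ?_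
    have : j.1 a ≤ k.1 a := hjk a
    have : k.1 a - j.1 a ≤ ks.1 a := hks a
    omega
  have hμdg : dgF μ₁ + dgF μ₂ = dgF μ := by rw [← dgF_add, hμ]
  simp only [degPi, degD, dgF_add, dgF_equivFunOnFinite_symm_snoc, hdg]
  omega

theorem degPi_le_ordPi {P : PiOp m K} {ks : (Fin m → ℕ) × ℤ} {μ : Fin (m + 1) →₀ ℕ}
    (h : coeff μ (P ks) ≠ 0) : ((degPi ks μ : ℝ) : EReal) ≤ ordPi P :=
  le_iSup_of_le ks (le_iSup_of_le μ (le_iSup_of_le h le_rfl))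

theorem degD_le_ordD {Q : DOp m K} {kt : (Fin m → ℕ) × ℕ} {μ : Fin (m + 1) →₀ ℕ}
    (h : coeff μ (Q kt) ≠ 0) : ((degD kt μ : ℝ) : EReal) ≤ ordD Q :=
  le_iSup_of_le kt (le_iSup_of_le μ (le_iSup_of_le h le_rfl))

theorem degPi_le_of_ordPi_eq {P : PiOp m K} {d : ℤ} (hd : ordPi P = ((d : ℝ) : EReal))
    {ks : (Fin m → ℕ) × ℤ} {μ : Fin (m + 1) →₀ ℕ} (h : coeff μ (P ks) ≠ 0) : degPi ks μ ≤ d := by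
  have := degPi_le_ordPi h
  rw [hd] at this
  exact_mod_cast this

theorem exists_isGreatest_degD {Q : DOp m K} (hQ : ordD Q ≠ ⊤) (hQ0 : Q ≠ 0) :
    ∃ e, IsGreatest {z | ∃ kt μ, coeff μ (Q kt) ≠ 0 ∧ degD kt μ = z} e := by
  obtain ⟨r, hr, -⟩ := EReal.exists_between_coe_real hQ.lt_top
  have hbdd : ∃ b : ℤ, ∀ z, (∃ kt μ, coeff μ (Q kt) ≠ 0 ∧ degD kt μ = z) → z ≤ b := by
    refine ⟨⌈r⌉, ?_⟩
    rintro _ ⟨kt, μ, h, rfl⟩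
    have : ((degD kt μ : ℝ) : EReal) < r := (degD_le_ordD h).trans_lt hr
    exact Int.le_ceil_iff.2 (by linarith [EReal.coe_lt_coe_iff.1 this])
  have hne : ∃ z, ∃ kt μ, coeff μ (Q kt) ≠ 0 ∧ degD kt μ = z := by
    obtain ⟨kt, hkt⟩ := Function.ne_iff.1 hQ0
    obtain ⟨μ, hμ⟩ := (MvPowerSeries.ne_zero_iff_exists_coeff_ne_zero _).1 hkt
    exact ⟨_, kt, μ, hμ, rfl⟩
  exact Int.exists_greatest_of_bdd hbdd hne

theorem exists_coeff_ne_zero_degD_eq_min_dgF {Q : DOp m K} {e : ℤ}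
    (he : ∃ kt μ, coeff μ (Q kt) ≠ 0 ∧ degD kt μ = e) :
    ∃ kt₀ μ₀, coeff μ₀ (Q kt₀) ≠ 0 ∧ degD kt₀ μ₀ = e ∧
      ∀ kt μ, coeff μ (Q kt) ≠ 0 → degD kt μ = e → dgF μ₀ ≤ dgF μ := by
  obtain ⟨kt, μ, h, hdeg⟩ := he
  obtain ⟨⟨kt₀, μ₀⟩, ⟨h₀, hdeg₀⟩, hmin⟩ := (measure fun p : _ × (Fin (m + 1) →₀ ℕ) =>
    dgF p.2).wf.has_min {p | coeff p.2 (Q p.1) ≠ 0 ∧ degD p.1 p.2 = e} ⟨(kt, μ), h, hdeg⟩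
  exact ⟨kt₀, μ₀, h₀, hdeg₀, fun kt μ h hdeg => not_lt.1 (hmin (kt, μ) ⟨h, hdeg⟩)⟩

/-- The `x^μ₀`-coefficient of the degree-`e` component of `Q`, an element of `F`. -/
def symbolCoeff (Q : DOp m K) (e : ℤ) (μ₀ : Fin (m + 1) →₀ ℕ) : ((Fin m → ℕ) × ℕ) →₀ K :=
  Finsupp.ofSupportFinite (fun kt => if degD kt μ₀ = e then coeff μ₀ (Q kt) else 0) <|
    (finite_setOf_dg_add_eq (e + dgF μ₀).toNat).subset fun kt hkt => by
      by_cases h : degD kt μ₀ = e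
      · simp only [degD] at h
        show dg kt.1 + kt.2 = _
        omega
      · exact absurd (if_neg h) hkt

theorem symbolCoeff_apply (Q : DOp m K) (e : ℤ) (μ₀ : Fin (m + 1) →₀ ℕ)
    (kt : (Fin m → ℕ) × ℕ) :
    symbolCoeff Q e μ₀ kt = if degD kt μ₀ = e then coeff μ₀ (Q kt) else 0 := rfl

variable {P : PiOp m K} {d : ℤ} {Q : DOp m K} {e : ℤ} {μ₀ : Fin (m + 1) →₀ ℕ} {ks : (Fin m → ℕ) × ℤ} {k j : (Fin m → ℕ) × ℕ}

theorem coeff_Dmulti (ν : Fin (m + 1) →₀ ℕ) (J : Fin (m + 1) → ℕ)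
    (b : MvPowerSeries (Fin (m + 1)) K) :
    coeff ν (Dmulti J b) = (∏ i, (((ν i + J i).factorial / (ν i).factorial : ℕ) : K)) *
      coeff (ν + Finsupp.equivFunOnFinite.symm J) b := rfl

theorem coeff_compPi (P : PiOp m K) (d : ℤ) (ks : (Fin m → ℕ) × ℤ) (μ : Fin (m + 1) →₀ ℕ) :
    coeff μ (compPi P d ks) = if degPi ks μ = d then coeff μ (P ks) else 0 := rfl

theorem coeff_zero_liftD_symbolCoeff_mul_of_degPi_ne (hjk : j.1 ≤ k.1)
    (hks : (fun a => k.1 a - j.1 a) ≤ ks.1) (h : degPi ks μ₀ ≠ e + d) :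
    coeff 0 (liftD (symbolCoeff Q e μ₀) k * Dmulti (Fin.snoc j.1 j.2)
      (compPi P d (fun a => ks.1 a - (k.1 a - j.1 a), ks.2 - ((k.2 : ℤ) - j.2)))) = 0 := by
  have hdeg := degPi_eq_degD_add_degPi (μ₂ := 0) hjk hks (add_zero μ₀)
  rw [liftD, coeff_C_mul, symbolCoeff_apply, coeff_Dmulti, coeff_compPi]
  split_ifs with hQ hP
  · omega
  all_goals simp

theorem coeff_zero_liftD_symbolCoeff_mul_of_degPi_eq
    (hP : ∀ ks μ, coeff μ (P ks) ≠ 0 → degPi ks μ ≤ d)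
    (hQ : ∀ kt μ, coeff μ (Q kt) ≠ 0 → degD kt μ ≤ e)
    (hμ₀ : ∀ kt μ, coeff μ (Q kt) ≠ 0 → degD kt μ = e → dgF μ₀ ≤ dgF μ)
    (hjk : j.1 ≤ k.1) (hks : (fun a => k.1 a - j.1 a) ≤ ks.1) (h : degPi ks μ₀ = e + d) :
    coeff 0 (liftD (symbolCoeff Q e μ₀) k * Dmulti (Fin.snoc j.1 j.2)
      (compPi P d (fun a => ks.1 a - (k.1 a - j.1 a), ks.2 - ((k.2 : ℤ) - j.2)))) =
    coeff μ₀ (Q k * Dmulti (Fin.snoc j.1 j.2)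
      (P (fun a => ks.1 a - (k.1 a - j.1 a), ks.2 - ((k.2 : ℤ) - j.2)))) := by
  classical
  set ι : (Fin m → ℕ) × ℤ := (fun a => ks.1 a - (k.1 a - j.1 a), ks.2 - ((k.2 : ℤ) - j.2))
  set J : Fin (m + 1) →₀ ℕ := Finsupp.equivFunOnFinite.symm (Fin.snoc j.1 j.2)
  have hdeg : ∀ μ₁ μ₂, μ₁ + μ₂ = μ₀ → coeff μ₁ (Q k) ≠ 0 → coeff (μ₂ + J) (P ι) ≠ 0 →
      degD k μ₁ = e ∧ degPi ι (μ₂ + J) = d := by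
    intro μ₁ μ₂ hμ hQc hPc
    have : degPi ks μ₀ = degD k μ₁ + degPi ι (μ₂ + J) := degPi_eq_degD_add_degPi hjk hks hμ
    have := hQ _ _ hQc
    have := hP _ _ hPc
    omega
  rw [liftD, coeff_C_mul, coeff_mul μ₀,
    Finset.sum_eq_single_of_mem (μ₀, 0) (Finset.HasAntidiagonal.mem_antidiagonal.2 (add_zero μ₀))]
  · rw [symbolCoeff_apply, coeff_Dmulti, coeff_Dmulti, coeff_compPi]
    by_cases hQc : coeff μ₀ (Q k) = 0
    · simp [hQc]
    by_cases hPc : coeff (0 + J) (P ι) = 0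
    · rw [hPc]
      simp
    obtain ⟨hQe, hPd⟩ := hdeg μ₀ 0 (add_zero _) hQc hPc
    rw [if_pos hQe, if_pos hPd, mul_left_comm]
  · rintro ⟨μ₁, μ₂⟩ hμ hne
    simp only [Finset.HasAntidiagonal.mem_antidiagonal] at hμ
    by_contra hterm
    have hQc : coeff μ₁ (Q k) ≠ 0 := left_ne_zero_of_mul hterm
    have hPc : coeff (μ₂ + J) (P ι) ≠ 0 := fun h0 =>
      right_ne_zero_of_mul hterm (by rw [coeff_Dmulti, h0, mul_zero])
    have hmin := hμ₀ k μ₁ hQc (hdeg μ₁ μ₂ hμ hQc hPc).1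
    have hsum : dgF μ₁ + dgF μ₂ = dgF μ₀ := by rw [← dgF_add, hμ]
    obtain rfl : μ₂ = 0 := (Finsupp.degree_eq_zero_iff μ₂).1 (by rw [← dgF_eq_degree]; omega)
    rw [add_zero] at hμ
    exact hne (by rw [hμ])

theorem piPi_opAct_liftD_symbolCoeff
    (hP : ∀ ks μ, coeff μ (P ks) ≠ 0 → degPi ks μ ≤ d)
    (hQ : ∀ kt μ, coeff μ (Q kt) ≠ 0 → degD kt μ ≤ e)
    (hμ₀ : ∀ kt μ, coeff μ (Q kt) ≠ 0 → degD kt μ = e → dgF μ₀ ≤ dgF μ)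
    (ks : (Fin m → ℕ) × ℤ) :
    piPi (opAct (liftD (symbolCoeff Q e μ₀)) (compPi P d)) ks =
      if degPi ks μ₀ = e + d then coeff μ₀ (opAct Q P ks) else 0 := by
  rw [piPi, ← coeff_zero_eq_constantCoeff_apply, coeff_apply, coeff_apply]
  unfold opAct
  split_ifs with h
  · refine finsum_congr fun k => finsum_congr fun j => ?_
    split_ifs with hkj
    · rw [coeff_zero_liftD_symbolCoeff_mul_of_degPi_eq hP hQ hμ₀ hkj.1 hkj.2.2 h]
    · rfl
  · refine finsum_eq_zero_of_forall_eq_zero fun k => finsum_eq_zero_of_forall_eq_zero fun j => ?_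
    split_ifs with hkj
    · rw [coeff_zero_liftD_symbolCoeff_mul_of_degPi_ne hkj.1 hkj.2.2 h, mul_zero]
    · rfl

end

/-- If `P ∈ Π̂ₙ` is regular — `ord P = d` and
`f ↦ π(f ∘ σ(P))` is injective on `F` — then `Q ∘ P = 0` with
`Q ∈ D̂ₙ^sym` implies `Q = 0`. -/
theorem regular_not_torsion
    (P : PiOp m K) (d : ℤ) (hd : ordPi P = (((d : ℝ)) : EReal))
    (hreg : ∀ f : ((Fin m → ℕ) × ℕ) →₀ K, f ≠ 0 →
      piPi (opAct (liftD f) (compPi P d)) ≠ 0) :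
    ∀ Q : DOp m K, ordD Q ≠ ⊤ → opAct Q P = 0 → Q = 0 := by
  intro Q hQ hQP
  by_contra hQ0
  obtain ⟨e, he, hQe⟩ := exists_isGreatest_degD hQ hQ0
  obtain ⟨kt₀, μ₀, hc₀, hdeg₀, hμ₀⟩ := exists_coeff_ne_zero_degD_eq_min_dgF he
  have hf : symbolCoeff Q e μ₀ ≠ 0 := fun h0 => hc₀ <| by
    simpa [symbolCoeff_apply, hdeg₀] using DFunLike.congr_fun h0 kt₀
  refine hreg _ hf (funext fun ks => ?_)
  rw [piPi_opAct_liftD_symbolCoeff (fun _ _ => degPi_le_of_ordPi_eq hd)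
    (fun kt μ h => hQe ⟨kt, μ, h, rfl⟩) hμ₀, hQP]
  simp

end
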